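/- arXiv:2209.10575 — 2 statements merged into one kernel-verified Lean document; each statement's English description precedes it below -/
import Mathlib

section
/- Let n ≥ 1, let r ∈ ℝ^n, and let M ∈ ℝ^{n×n} be symmetric positive definite with largest eigenvalue λ_max(M) and smallest eigenvalue λ_min(M). Then f(r, M) ≥ (1/2) ln λ_max(M) + ((n−1)/2) ln λ_min(M), and if r ≠ 0 then also f(r, M) ≥ (1/2)(1 + ln(‖r‖²/n)) + ((n−1)/2) ln λ_min(M). -/
open Matrix Real Filter Topology Bornology
open scoped Pointwise

noncomputable section

abbrev Vec (k : ℕ) : Type := Fin k → ℝ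

/-- Euclidean norm of a vector. -/
def eNorm {ι : Type*} [Fintype ι] (x : ι → ℝ) : ℝ := Real.sqrt (∑ j, (x j) ^ 2)

/-- Squared Euclidean norm of a pair of vectors. -/
def sqnorm2 {p q : ℕ} (w : Vec p × Vec q) : ℝ :=
  (∑ j, (w.1 j) ^ 2) + ∑ j, (w.2 j) ^ 2

/-- ℓ²→ℓ² operator norm of a matrix (its largest singular value). -/
def opNorm {ι κ : Type*} [Fintype ι] [Fintype κ] (M : Matrix ι κ ℝ) : ℝ :=
  sInf {c : ℝ | 0 ≤ c ∧ ∀ x : κ → ℝ, eNorm (M.mulVec x) ≤ c * eNorm x}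

/-- Smallest eigenvalue of a symmetric matrix, via Rayleigh quotients. -/
def minEig {ι : Type*} [Fintype ι] (M : Matrix ι ι ℝ) : ℝ :=
  sInf {r : ℝ | ∃ x : ι → ℝ, eNorm x = 1 ∧ r = x ⬝ᵥ M.mulVec x}

/-- Largest eigenvalue of a symmetric matrix, via Rayleigh quotients. -/
def maxEig {ι : Type*} [Fintype ι] (M : Matrix ι ι ℝ) : ℝ :=
  sSup {r : ℝ | ∃ x : ι → ℝ, eNorm x = 1 ∧ r = x ⬝ᵥ M.mulVec x}

/-- The log-barrier (perspective of the negative log). -/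
def phiBar (μ : ℝ) {q : ℕ} (γ : Vec q) : EReal :=
  if μ = 0 then (if ∀ j, 0 ≤ γ j then (0 : EReal) else ⊤)
  else if 0 < μ then
    (if ∀ j, 0 < γ j then (((-μ) * ∑ j, Real.log (γ j / μ) : ℝ) : EReal) else ⊤)
  else ⊤

/-- The coupling function κ_η. -/
def kappaFun (η : ℝ) {p q : ℕ} (w : Vec p × Vec q) : ℝ := η / 2 * sqnorm2 w

/-- 1-coercivity: liminf of F(w)/‖w‖ as ‖w‖ → ∞ is positive. -/
def OneCoercive {p q : ℕ} (R : Vec p × Vec q → EReal) : Prop :=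
  ∃ c : ℝ, 0 < c ∧ ∃ r : ℝ, ∀ w : Vec p × Vec q,
    r ≤ Real.sqrt (sqnorm2 w) → ((c * Real.sqrt (sqnorm2 w) : ℝ) : EReal) ≤ R w

/-- Data of a linear mixed-effects model. -/
structure LMEData (m p q : ℕ) where
  n : Fin m → ℕ
  X : ∀ i, Matrix (Fin (n i)) (Fin p) ℝ
  Z : ∀ i, Matrix (Fin (n i)) (Fin q) ℝ
  y : ∀ i, Fin (n i) → ℝ
  lam : ∀ i, Matrix (Fin (n i)) (Fin (n i)) ℝ

namespace LMEData

variable {m p q : ℕ}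

/-- Ω_i(Γ) = Z_i Γ Z_iᵀ + Λ_i. -/
def Omega (D : LMEData m p q) (Γ : Matrix (Fin q) (Fin q) ℝ) (i : Fin m) :
    Matrix (Fin (D.n i)) (Fin (D.n i)) ℝ :=
  D.Z i * Γ * (D.Z i)ᵀ + D.lam i

/-- The marginal negative log-likelihood L_ML(β, Γ). -/
def LML (D : LMEData m p q) (β : Vec p) (Γ : Matrix (Fin q) (Fin q) ℝ) : ℝ :=
  ∑ i, ((1 : ℝ) / 2 * ((D.y i - D.X i *ᵥ β) ⬝ᵥ ((D.Omega Γ i)⁻¹ *ᵥ (D.y i - D.X i *ᵥ β)))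
    + (1 : ℝ) / 2 * Real.log (D.Omega Γ i).det)

/-- L(β, γ) = L_ML(β, Diag γ). -/
def L (D : LMEData m p q) (β : Vec p) (γ : Vec q) : ℝ := D.LML β (Matrix.diagonal γ)

/-- ν = max_i (1/2) μ_min(Λ_i)^{-2} σ_max(Z_i)^4. -/
def nu (D : LMEData m p q) : ℝ :=
  ⨆ i : Fin m, (1 : ℝ) / 2 * ((minEig (D.lam i)) ^ 2)⁻¹ * (opNorm (D.Z i)) ^ 4

/-- η̄ = ν m. -/
def etabar (D : LMEData m p q) : ℝ := D.nu * m

/-- L_{η,μ}((β,γ),(β̃,γ̃)) = L(β,γ) + φ_μ(γ) + κ_η(β−β̃,γ−γ̃). -/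
def Lrelax (D : LMEData m p q) (η μ : ℝ) (x w : Vec p × Vec q) : EReal :=
  ((D.L x.1 x.2 + kappaFun η (x - w) : ℝ) : EReal) + phiBar μ x.2

/-- The optimal value function u_{η,μ} (with extended-real values). -/
def uval (D : LMEData m p q) (η μ : ℝ) (w : Vec p × Vec q) : EReal :=
  ⨅ x : Vec p × Vec q, D.Lrelax η μ x w

/-- The (real-valued) optimal value function u_{η,μ}. -/
def ufun (D : LMEData m p q) (η μ : ℝ) (w : Vec p × Vec q) : ℝ := (D.uval η μ w).toReal

/-- Partial gradient ∇_β L. -/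
def gradB (D : LMEData m p q) (β : Vec p) (γ : Vec q) : Vec p :=
  fun j => fderiv ℝ (fun b => D.L b γ) β (Pi.single j 1)

/-- Partial gradient ∇_γ L. -/
def gradG (D : LMEData m p q) (β : Vec p) (γ : Vec q) : Vec q :=
  fun j => fderiv ℝ (fun g => D.L β g) γ (Pi.single j 1)

/-- The map G_{η,μ}. -/
def Gmap (D : LMEData m p q) (η μ : ℝ) (x : Vec p × Vec q × Vec q) (w : Vec p × Vec q) :
    Vec p × Vec q × Vec q :=
  (D.gradB x.1 x.2.1 + η • (x.1 - w.1),
   D.gradG x.1 x.2.1 + η • (x.2.1 - w.2) - x.2.2,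
   fun j => x.2.2 j * x.2.1 j - μ)

/-- Second-derivative block ∇²_{ββ} L. -/
def hessBB (D : LMEData m p q) (β : Vec p) (γ : Vec q) : Matrix (Fin p) (Fin p) ℝ :=
  Matrix.of fun j k => fderiv ℝ (fun b => D.gradB b γ j) β (Pi.single k 1)

/-- Second-derivative block ∇²_{γγ} L. -/
def hessGG (D : LMEData m p q) (β : Vec p) (γ : Vec q) : Matrix (Fin q) (Fin q) ℝ :=
  Matrix.of fun j k => fderiv ℝ (fun g => D.gradG β g j) γ (Pi.single k 1)

/-- Second-derivative block ∇²_{γβ} L (the p×q cross block). -/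
def hessGB (D : LMEData m p q) (β : Vec p) (γ : Vec q) : Matrix (Fin p) (Fin q) ℝ :=
  Matrix.of fun j k => fderiv ℝ (fun g => D.gradB β g j) γ (Pi.single k 1)

/-- Second-derivative block ∇²_{βγ} L (the q×p cross block). -/
def hessBG (D : LMEData m p q) (β : Vec p) (γ : Vec q) : Matrix (Fin q) (Fin p) ℝ :=
  Matrix.of fun j k => fderiv ℝ (fun b => D.gradG b γ j) β (Pi.single k 1)

end LMEData

/-- f(r, M) = (1/2)(rᵀM⁻¹r + ln det M). -/
def fRM {n : ℕ} (r : Vec n) (M : Matrix (Fin n) (Fin n) ℝ) : ℝ :=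
  (1 : ℝ) / 2 * (r ⬝ᵥ (M⁻¹ *ᵥ r) + Real.log M.det)

/-!
Diagonalize `M = U diag(λ) Uᵀ` with `U` orthogonal. The Rayleigh quotients of `M` are convex
combinations of the eigenvalues, so `maxEig M` and `minEig M` are the largest and smallest
eigenvalue. Then `log det M = ∑ log λᵢ ≥ log λ_max + (n - 1) log λ_min`, while
`rᵀ M⁻¹ r = ∑ yᵢ² / λᵢ` (with `y = Uᵀ r`, `‖y‖ = ‖r‖`) is nonnegative and at least `‖r‖² / λ_max`.
For the second bound, `s / λ + log λ ≥ 1 + log s` (the minimum is at `λ = s`), applied with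
`s = ‖r‖² ≥ ‖r‖² / n`.
-/

lemma sq_eNorm {ι : Type*} [Fintype ι] (x : ι → ℝ) : eNorm x ^ 2 = ∑ j, x j ^ 2 :=
  Real.sq_sqrt (Finset.sum_nonneg fun j _ => sq_nonneg (x j))

lemma eNorm_pos {ι : Type*} [Fintype ι] {x : ι → ℝ} (hx : x ≠ 0) : 0 < eNorm x := by
  refine Real.sqrt_pos.2 (lt_of_le_of_ne (Finset.sum_nonneg fun j _ => sq_nonneg (x j)) ?_)
  simpa [sq, dotProduct, eq_comm] using (dotProduct_self_eq_zero (v := x)).not.2 hx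

lemma Real.one_add_log_le_div_add_log {s t : ℝ} (hs : 0 < s) (ht : 0 < t) :
    1 + Real.log s ≤ s / t + Real.log t := by
  have := Real.log_le_sub_one_of_pos (div_pos hs ht)
  rw [Real.log_div hs.ne' ht.ne'] at this
  linarith

namespace Matrix

variable {ι : Type*} [Fintype ι] [DecidableEq ι]

lemma dotProduct_conj_diagonal_mulVec {R : Type*} [CommRing R] (U : Matrix ι ι R) (d x : ι → R) :
    x ⬝ᵥ (U * diagonal d * Uᵀ) *ᵥ x = ∑ i, d i * (Uᵀ *ᵥ x) i ^ 2 := by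
  rw [← mulVec_mulVec, ← mulVec_mulVec, dotProduct_mulVec, ← mulVec_transpose]
  simp only [dotProduct, mulVec_diagonal]
  exact Finset.sum_congr rfl fun i _ => by ring

lemma sum_sq_transpose_mulVec {R : Type*} [CommRing R] {U : Matrix ι ι R} (hU : U * Uᵀ = 1)
    (x : ι → R) :
    ∑ i, (Uᵀ *ᵥ x) i ^ 2 = ∑ i, x i ^ 2 := by
  have hself (v : ι → R) : ∑ i, v i ^ 2 = v ⬝ᵥ v := by simp [dotProduct, sq]
  rw [hself, hself, dotProduct_mulVec, vecMul_transpose, mulVec_mulVec, hU, one_mulVec]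

lemma inv_conj_diagonal {K : Type*} [Field K] {U : Matrix ι ι K} (hU : Uᵀ * U = 1)
    (hU' : U * Uᵀ = 1) {d : ι → K} (hd : ∀ i, d i ≠ 0) : (U * diagonal d * Uᵀ)⁻¹ = U * diagonal d⁻¹ * Uᵀ := by
  refine inv_eq_right_inv ?_
  calc U * diagonal d * Uᵀ * (U * diagonal d⁻¹ * Uᵀ)
      = U * (diagonal d * (Uᵀ * U) * diagonal d⁻¹) * Uᵀ := by simp only [Matrix.mul_assoc]
    _ = 1 := by
        rw [hU, Matrix.mul_one, diagonal_mul_diagonal]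
        simp [mul_inv_cancel₀ (hd _), hU']

namespace IsHermitian

variable {A : Matrix ι ι ℝ} (hA : A.IsHermitian)

lemma eq_conj_diagonal_eigenvalues :
    A = (hA.eigenvectorUnitary : Matrix ι ι ℝ) * diagonal hA.eigenvalues
      * (hA.eigenvectorUnitary : Matrix ι ι ℝ)ᵀ := by
  convert hA.spectral_theorem using 3
  simp [Unitary.conjStarAlgAut_apply, RCLike.ofReal_real_eq_id]
  rfl

local notation "U" => (hA.eigenvectorUnitary : Matrix ι ι ℝ)

lemma mul_transpose_eigenvectorUnitary : U * Uᵀ = 1 :=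
  Matrix.mem_unitaryGroup_iff.mp hA.eigenvectorUnitary.2

lemma transpose_mul_eigenvectorUnitary : Uᵀ * U = 1 :=
  Matrix.mem_unitaryGroup_iff'.mp hA.eigenvectorUnitary.2

lemma dotProduct_mulVec_eq_sum_eigenvalues (x : ι → ℝ) :
    x ⬝ᵥ A *ᵥ x = ∑ i, hA.eigenvalues i * (Uᵀ *ᵥ x) i ^ 2 := by
  conv_lhs => rw [hA.eq_conj_diagonal_eigenvalues]
  exact dotProduct_conj_diagonal_mulVec _ _ x

lemma inv_eq_conj_diagonal_inv_eigenvalues (hd : ∀ i, hA.eigenvalues i ≠ 0) :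
    A⁻¹ = U * diagonal (hA.eigenvalues)⁻¹ * Uᵀ :=
  (congrArg Inv.inv hA.eq_conj_diagonal_eigenvalues).trans <|
    inv_conj_diagonal hA.transpose_mul_eigenvectorUnitary hA.mul_transpose_eigenvectorUnitary hd

lemma dotProduct_inv_mulVec_eq_sum_eigenvalues (hd : ∀ i, hA.eigenvalues i ≠ 0) (x : ι → ℝ) :
    x ⬝ᵥ A⁻¹ *ᵥ x = ∑ i, (hA.eigenvalues i)⁻¹ * (Uᵀ *ᵥ x) i ^ 2 := by
  rw [hA.inv_eq_conj_diagonal_inv_eigenvalues hd]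
  exact dotProduct_conj_diagonal_mulVec _ _ x

lemma exists_eNorm_eq_one_eigenvalues_eq (i : ι) :
    ∃ x : ι → ℝ, eNorm x = 1 ∧ hA.eigenvalues i = x ⬝ᵥ A *ᵥ x := by
  have hx : Uᵀ *ᵥ (U *ᵥ Pi.single i 1) = Pi.single i 1 := by
    rw [mulVec_mulVec, hA.transpose_mul_eigenvectorUnitary, one_mulVec]
  refine ⟨U *ᵥ Pi.single i 1, ?_, ?_⟩
  · rw [eNorm, ← sum_sq_transpose_mulVec hA.mul_transpose_eigenvectorUnitary, hx]
    simp [Pi.single_apply]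
  · rw [hA.dotProduct_mulVec_eq_sum_eigenvalues, hx]
    simp [Pi.single_apply]

variable {x : ι → ℝ}

lemma dotProduct_mulVec_le_iSup_eigenvalues (hx : eNorm x = 1) :
    x ⬝ᵥ A *ᵥ x ≤ ⨆ i, hA.eigenvalues i := by
  have hunit : ∑ i, (Uᵀ *ᵥ x) i ^ 2 = 1 := by
    rw [sum_sq_transpose_mulVec hA.mul_transpose_eigenvectorUnitary, ← sq_eNorm, hx, one_pow]
  rw [hA.dotProduct_mulVec_eq_sum_eigenvalues, ← mul_one (⨆ i, _), ← hunit, Finset.mul_sum]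
  exact Finset.sum_le_sum fun i _ => mul_le_mul_of_nonneg_right
    (le_ciSup (Set.finite_range _).bddAbove i) (sq_nonneg _)

lemma iInf_eigenvalues_le_dotProduct_mulVec (hx : eNorm x = 1) :
    ⨅ i, hA.eigenvalues i ≤ x ⬝ᵥ A *ᵥ x := by
  have hunit : ∑ i, (Uᵀ *ᵥ x) i ^ 2 = 1 := by
    rw [sum_sq_transpose_mulVec hA.mul_transpose_eigenvectorUnitary, ← sq_eNorm, hx, one_pow]
  rw [hA.dotProduct_mulVec_eq_sum_eigenvalues, ← mul_one (⨅ i, _), ← hunit, Finset.mul_sum]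
  exact Finset.sum_le_sum fun i _ => mul_le_mul_of_nonneg_right
    (ciInf_le (Set.finite_range _).bddBelow i) (sq_nonneg _)

variable [Nonempty ι]

lemma maxEig_eq_iSup_eigenvalues : maxEig A = ⨆ i, hA.eigenvalues i := by
  obtain ⟨x, hx, -⟩ := hA.exists_eNorm_eq_one_eigenvalues_eq (Classical.arbitrary ι)
  refine le_antisymm (csSup_le ⟨_, x, hx, rfl⟩ ?_) (ciSup_le fun i => le_csSup ?_ ?_)
  · rintro _ ⟨y, hy, rfl⟩
    exact hA.dotProduct_mulVec_le_iSup_eigenvalues hy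
  · exact ⟨_, fun _ ⟨y, hy, hs⟩ => hs ▸ hA.dotProduct_mulVec_le_iSup_eigenvalues hy⟩
  · exact hA.exists_eNorm_eq_one_eigenvalues_eq i

lemma minEig_eq_iInf_eigenvalues : minEig A = ⨅ i, hA.eigenvalues i := by
  obtain ⟨x, hx, -⟩ := hA.exists_eNorm_eq_one_eigenvalues_eq (Classical.arbitrary ι)
  refine le_antisymm (le_ciInf fun i => csInf_le ?_ ?_) (le_csInf ⟨_, x, hx, rfl⟩ ?_)
  · exact ⟨_, fun _ ⟨y, hy, hs⟩ => hs ▸ hA.iInf_eigenvalues_le_dotProduct_mulVec hy⟩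
  · exact hA.exists_eNorm_eq_one_eigenvalues_eq i
  · rintro _ ⟨y, hy, rfl⟩
    exact hA.iInf_eigenvalues_le_dotProduct_mulVec hy

end IsHermitian

namespace PosDef

variable {A : Matrix ι ι ℝ} [Nonempty ι]

lemma maxEig_pos (hA : A.PosDef) : 0 < maxEig A := by
  obtain ⟨i, hi⟩ := exists_eq_ciSup_of_finite (f := hA.isHermitian.eigenvalues)
  rw [hA.isHermitian.maxEig_eq_iSup_eigenvalues, ← hi]
  exact hA.eigenvalues_pos i

lemma minEig_pos (hA : A.PosDef) : 0 < minEig A := by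
  obtain ⟨i, hi⟩ := exists_eq_ciInf_of_finite (f := hA.isHermitian.eigenvalues)
  rw [hA.isHermitian.minEig_eq_iInf_eigenvalues, ← hi]
  exact hA.eigenvalues_pos i

lemma log_maxEig_add_mul_log_minEig_le_log_det (hA : A.PosDef) :
    Real.log (maxEig A) + ((Fintype.card ι : ℝ) - 1) * Real.log (minEig A)
      ≤ Real.log A.det := by
  set d := hA.isHermitian.eigenvalues
  obtain ⟨j, hj⟩ := exists_eq_ciSup_of_finite (f := d)
  have hdet : A.det = ∏ i, d i := by simpa using hA.isHermitian.det_eq_prod_eigenvalues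
  have hcard : (((Finset.univ : Finset ι).erase j).card : ℝ) = Fintype.card ι - 1 := by
    rw [Finset.card_erase_of_mem (Finset.mem_univ j), Finset.card_univ,
      Nat.cast_sub Fintype.card_pos, Nat.cast_one]
  rw [hdet, Real.log_prod fun i _ => (hA.eigenvalues_pos i).ne',
    ← Finset.add_sum_erase _ _ (Finset.mem_univ j), hA.isHermitian.maxEig_eq_iSup_eigenvalues,
    ← hj, ← hcard, ← nsmul_eq_mul, ← Finset.sum_const]
  gcongr with i
  · exact hA.minEig_pos
  · rw [hA.isHermitian.minEig_eq_iInf_eigenvalues]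
    exact ciInf_le (Set.finite_range _).bddBelow i

lemma sq_eNorm_div_maxEig_le (hA : A.PosDef) (x : ι → ℝ) :
    eNorm x ^ 2 / maxEig A ≤ x ⬝ᵥ A⁻¹ *ᵥ x := by
  have hd := hA.eigenvalues_pos
  rw [hA.isHermitian.dotProduct_inv_mulVec_eq_sum_eigenvalues fun i => (hd i).ne', sq_eNorm,
    ← sum_sq_transpose_mulVec hA.isHermitian.mul_transpose_eigenvectorUnitary,
    div_eq_inv_mul, Finset.mul_sum, hA.isHermitian.maxEig_eq_iSup_eigenvalues]
  gcongr with i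
  · exact hd i
  · exact le_ciSup (Set.finite_range _).bddAbove i

end PosDef

end Matrix

/-- lower bounds for f(r,M) in terms of the extreme eigenvalues of M
and the norm of r. -/
theorem fRM_lower_bounds
    {n : ℕ} (hn : 1 ≤ n) (r : Vec n) (M : Matrix (Fin n) (Fin n) ℝ) (hM : M.PosDef) :
    (1 : ℝ) / 2 * Real.log (maxEig M) + ((n : ℝ) - 1) / 2 * Real.log (minEig M)
      ≤ fRM r M ∧
    (r ≠ 0 →
      (1 : ℝ) / 2 * (1 + Real.log ((eNorm r) ^ 2 / (n : ℝ)))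
          + ((n : ℝ) - 1) / 2 * Real.log (minEig M)
        ≤ fRM r M) := by
  have : Nonempty (Fin n) := ⟨⟨0, hn⟩⟩
  have hdet := hM.log_maxEig_add_mul_log_minEig_le_log_det
  rw [Fintype.card_fin] at hdet
  have hquad_nonneg : 0 ≤ r ⬝ᵥ (M⁻¹ *ᵥ r) := by
    simpa using hM.inv.posSemidef.dotProduct_mulVec_nonneg r
  refine ⟨by unfold fRM; linarith, fun hr => ?_⟩
  have hr2 : 0 < eNorm r ^ 2 := pow_pos (eNorm_pos hr) 2
  have hquad_ge := hM.sq_eNorm_div_maxEig_le r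
  have hone_add_log := Real.one_add_log_le_div_add_log hr2 hM.maxEig_pos
  have hlog : Real.log (eNorm r ^ 2 / n) ≤ Real.log (eNorm r ^ 2) :=
    Real.log_le_log (by positivity) (div_le_self hr2.le (by exact_mod_cast hn))
  unfold fRM
  linarith
end
end

section
/- For every ρ ∈ ℝ and every α > 0 the set D_{ρ,α} := {(r, M) ∈ ℝ^n × ℝ^{n×n} : M is symmetric positive definite, λ_min(M) ≥ α, and f(r, M) ≤ ρ} is compact, where λ_min(M) denotes the smallest eigenvalue of M. -/
open Matrix Real Filter Topology Bornology
open scoped Pointwise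

noncomputable section

/-! On positive semidefinite matrices the condition `α ≤ minEig M` is the Loewner bound
`α • 1 ≤ M`, a closed condition under which `M` is invertible, so `f` is continuous there and the
set is closed. It is also bounded: every eigenvalue of `M` is at least `α` and `ln det M ≤ 2ρ`
since `rᵀ M⁻¹ r ≥ 0`, so every eigenvalue is at most `β = e^{2ρ} / α^{n-1}`. Hence `0 ≤ M ≤ β • 1`
bounds the entries of `M` by `β`, and Cauchy–Schwarz for the form of `M`, applied to `r` and
`M⁻¹ r`, gives `|r|² ≤ β rᵀ M⁻¹ r ≤ β (2ρ - n ln α)`. -/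

open scoped MatrixOrder

section Rayleigh

variable {ι : Type*} [Fintype ι]

lemma eNorm_nonneg (x : ι → ℝ) : 0 ≤ eNorm x := Real.sqrt_nonneg _

lemma dotProduct_self_eq_eNorm_sq (x : ι → ℝ) : x ⬝ᵥ x = eNorm x ^ 2 := by
  rw [eNorm, Real.sq_sqrt (by positivity)]
  simp [dotProduct, sq]

lemma eNorm_eq_zero {x : ι → ℝ} : eNorm x = 0 ↔ x = 0 := by
  rw [← sq_eq_zero_iff, ← dotProduct_self_eq_eNorm_sq, dotProduct_self_eq_zero]

lemma eNorm_smul (c : ℝ) (x : ι → ℝ) : eNorm (c • x) = |c| * eNorm x := by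
  simp only [eNorm, Pi.smul_apply, smul_eq_mul, mul_pow, ← Finset.mul_sum]
  rw [Real.sqrt_mul (sq_nonneg c), Real.sqrt_sq_eq_abs]

lemma eNorm_single_one [DecidableEq ι] (i : ι) : eNorm (Pi.single i 1 : ι → ℝ) = 1 := by
  simp [eNorm, Pi.single_apply, apply_ite (· ^ 2)]

lemma minEig_of_isEmpty [IsEmpty ι] (M : Matrix ι ι ℝ) : minEig M = 0 := by
  simp [minEig, eNorm]

lemma le_minEig_iff_le_rayleigh [Nonempty ι] {M : Matrix ι ι ℝ} {a : ℝ} (hM : M.PosSemidef) :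
    a ≤ minEig M ↔ ∀ x, eNorm x = 1 → a ≤ x ⬝ᵥ M *ᵥ x := by
  classical
  have hbdd : BddBelow {r | ∃ x : ι → ℝ, eNorm x = 1 ∧ r = x ⬝ᵥ M *ᵥ x} :=
    ⟨0, by rintro _ ⟨x, -, rfl⟩; simpa using hM.dotProduct_mulVec_nonneg x⟩
  rw [minEig, le_csInf_iff hbdd ⟨_, _, eNorm_single_one (Classical.arbitrary ι), rfl⟩]
  simp only [Set.mem_ofPred_eq, forall_exists_index, and_imp]
  exact ⟨fun h x hx => h _ x hx rfl, fun h _ x hx hr => hr ▸ h x hx⟩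

end Rayleigh

namespace Matrix

variable {ι : Type*} [Fintype ι] {M : Matrix ι ι ℝ} {a b : ℝ}

lemma isClosed_setOf_posSemidef : IsClosed {M : Matrix ι ι ℝ | M.PosSemidef} := by
  simp_rw [posSemidef_iff_dotProduct_mulVec, Set.ofPred_and, Set.ofPred_forall]
  exact (isClosed_eq continuous_id.matrix_conjTranspose continuous_id).inter <|
    isClosed_iInter fun x => isClosed_le continuous_const <|
      continuous_const.dotProduct (continuous_id.matrix_mulVec continuous_const)

variable [DecidableEq ι]

lemma PosSemidef.dotProduct_mulVec_sq_le (hM : M.PosSemidef) (x y : ι → ℝ) :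
    (x ⬝ᵥ M *ᵥ y) ^ 2 ≤ (x ⬝ᵥ M *ᵥ x) * (y ⬝ᵥ M *ᵥ y) := by
  have hswap : y ⬝ᵥ M *ᵥ x = x ⬝ᵥ M *ᵥ y := by
    rw [dotProduct_mulVec, ← mulVec_transpose, dotProduct_comm,
      show Mᵀ = M by simpa [IsHermitian] using hM.1]
  simpa only [toBilin'_apply', hswap, ← sq] using
    (toBilin' M).apply_mul_apply_le_of_forall_zero_le
      (fun x => by simpa [toBilin'_apply'] using hM.dotProduct_mulVec_nonneg x) x y

lemma dotProduct_algebraMap_mulVec (x : ι → ℝ) (a : ℝ) :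
    x ⬝ᵥ algebraMap ℝ (Matrix ι ι ℝ) a *ᵥ x = a * (x ⬝ᵥ x) := by
  simp [Algebra.algebraMap_eq_smul_one, smul_mulVec]

lemma IsHermitian.algebraMap_le_iff_le_rayleigh (hM : M.IsHermitian) :
    algebraMap ℝ _ a ≤ M ↔ ∀ x, eNorm x = 1 → a ≤ x ⬝ᵥ M *ᵥ x := by
  have hsub : (M - algebraMap ℝ _ a).IsHermitian :=
    hM.sub (by simp [Algebra.algebraMap_eq_smul_one])
  simp only [le_iff, posSemidef_iff_dotProduct_mulVec, hsub, true_and, star_trivial, sub_mulVec,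
    dotProduct_sub, dotProduct_algebraMap_mulVec, sub_nonneg, dotProduct_self_eq_eNorm_sq]
  refine ⟨fun h x hx => by simpa [hx] using h x, fun h x => ?_⟩
  rcases eq_or_ne (eNorm x) 0 with hx | hx
  · simp [eNorm_eq_zero.1 hx, eNorm]
  have hunit : eNorm ((eNorm x)⁻¹ • x) = 1 := by
    rw [eNorm_smul, abs_inv, abs_of_nonneg (eNorm_nonneg x), inv_mul_cancel₀ hx]
  have h' := h _ hunit
  simp only [mulVec_smul, dotProduct_smul, smul_dotProduct, smul_eq_mul] at h'
  calc a * eNorm x ^ 2 ≤ eNorm x ^ 2 * ((eNorm x)⁻¹ * ((eNorm x)⁻¹ * (x ⬝ᵥ M *ᵥ x))) := by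
        rw [mul_comm a]; exact mul_le_mul_of_nonneg_left h' (sq_nonneg _)
    _ = x ⬝ᵥ M *ᵥ x := by field_simp

lemma PosSemidef.le_minEig_iff_algebraMap_le [Nonempty ι] (hM : M.PosSemidef) :
    a ≤ minEig M ↔ algebraMap ℝ _ a ≤ M :=
  (le_minEig_iff_le_rayleigh hM).trans hM.1.algebraMap_le_iff_le_rayleigh.symm

lemma posDef_of_algebraMap_le (ha : 0 < a) (h : algebraMap ℝ _ a ≤ M) : M.PosDef := by
  have h' := le_iff.1 h
  rw [← sub_add_cancel M (algebraMap ℝ _ a)]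
  rw [Algebra.algebraMap_eq_smul_one] at h' ⊢
  exact PosDef.posSemidef_add h' (PosDef.one.smul ha)

lemma isClosed_setOf_algebraMap_le (a : ℝ) :
    IsClosed {M : Matrix ι ι ℝ | algebraMap ℝ _ a ≤ M} :=
  isClosed_setOf_posSemidef.preimage (continuous_id.sub continuous_const)

lemma IsHermitian.algebraMap_le_iff_le_eigenvalues (hM : M.IsHermitian) :
    algebraMap ℝ _ a ≤ M ↔ ∀ i, a ≤ hM.eigenvalues i := by
  rw [algebraMap_le_iff_le_spectrum hM.isSelfAdjoint, hM.spectrum_real_eq_range_eigenvalues]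
  simp

lemma IsHermitian.le_algebraMap_iff_eigenvalues_le (hM : M.IsHermitian) :
    M ≤ algebraMap ℝ _ b ↔ ∀ i, hM.eigenvalues i ≤ b := by
  rw [le_algebraMap_iff_spectrum_le hM.isSelfAdjoint, hM.spectrum_real_eq_range_eigenvalues]
  simp

lemma pow_card_le_det_of_algebraMap_le (ha : 0 < a) (h : algebraMap ℝ _ a ≤ M) :
    a ^ Fintype.card ι ≤ M.det := by
  have hM := posDef_of_algebraMap_le ha h
  have hev := hM.1.algebraMap_le_iff_le_eigenvalues.1 h
  simpa [hM.1.det_eq_prod_eigenvalues] using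
    Finset.prod_le_prod (s := Finset.univ) (fun _ _ => ha.le) fun i _ => hev i

lemma le_algebraMap_of_det_le {D : ℝ} (ha : 0 < a) (h : algebraMap ℝ _ a ≤ M)
    (hD : M.det ≤ D) : M ≤ algebraMap ℝ _ (D / a ^ (Fintype.card ι - 1)) := by
  have hM := posDef_of_algebraMap_le ha h
  have hev := hM.1.algebraMap_le_iff_le_eigenvalues.1 h
  refine hM.1.le_algebraMap_iff_eigenvalues_le.2 fun j => ?_
  rw [le_div_iff₀ (pow_pos ha _)]
  calc hM.1.eigenvalues j * a ^ (Fintype.card ι - 1)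
      = hM.1.eigenvalues j * ∏ _i ∈ Finset.univ.erase j, a := by
        rw [Finset.prod_const, Finset.card_erase_of_mem (Finset.mem_univ j), Finset.card_univ]
    _ ≤ hM.1.eigenvalues j * ∏ i ∈ Finset.univ.erase j, hM.1.eigenvalues i :=
        mul_le_mul_of_nonneg_left (Finset.prod_le_prod (fun _ _ => ha.le) fun i _ => hev i)
          (ha.le.trans (hev j))
    _ = M.det := by
        rw [Finset.mul_prod_erase _ _ (Finset.mem_univ j), hM.1.det_eq_prod_eigenvalues]
        simp
    _ ≤ D := hD

lemma PosSemidef.abs_apply_le_of_le_algebraMap (hM : M.PosSemidef) (hb : M ≤ algebraMap ℝ _ b)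
    (i j : ι) : |M i j| ≤ b := by
  have hdiag (k : ι) : M k k ≤ b := by
    simpa [algebraMap_matrix_apply] using (le_iff.1 hb).diag_nonneg (i := k)
  have hb0 : 0 ≤ b := hM.diag_nonneg.trans (hdiag i)
  refine abs_le_of_sq_le_sq ?_ hb0
  calc M i j ^ 2 ≤ M i i * M j j := by
        simpa [mulVec_single, single_dotProduct] using
          hM.dotProduct_mulVec_sq_le (Pi.single i 1) (Pi.single j 1)
    _ ≤ b ^ 2 := by
        rw [sq]; exact mul_le_mul (hdiag i) (hdiag j) hM.diag_nonneg hb0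

lemma PosDef.dotProduct_self_le_mul_dotProduct_inv_mulVec (hM : M.PosDef)
    (hb : M ≤ algebraMap ℝ _ b) (r : ι → ℝ) : r ⬝ᵥ r ≤ b * (r ⬝ᵥ M⁻¹ *ᵥ r) := by
  rcases eq_or_ne r 0 with rfl | hr
  · simp
  have hMy : M *ᵥ (M⁻¹ *ᵥ r) = r := by
    rw [mulVec_mulVec, mul_nonsing_inv _ (M.isUnit_iff_isUnit_det.1 hM.isUnit), one_mulVec]
  have hcs := hM.posSemidef.dotProduct_mulVec_sq_le r (M⁻¹ *ᵥ r)
  rw [hMy, dotProduct_comm (M⁻¹ *ᵥ r)] at hcs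
  have hupper : r ⬝ᵥ M *ᵥ r ≤ b * (r ⬝ᵥ r) := by
    simpa [sub_mulVec, dotProduct_algebraMap_mulVec] using
      (le_iff.1 hb).dotProduct_mulVec_nonneg r
  have hpos : 0 < r ⬝ᵥ r := by simpa using dotProduct_self_star_pos_iff.2 hr
  have hq : 0 ≤ r ⬝ᵥ M⁻¹ *ᵥ r := by simpa using hM.inv.posSemidef.dotProduct_mulVec_nonneg r
  refine le_of_mul_le_mul_left ?_ hpos
  nlinarith [mul_le_mul_of_nonneg_right hupper hq]

end Matrix

lemma isCompact_setOf_abs_le {ι : Type*} [Finite ι] (c : ℝ) :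
    IsCompact {rM : (ι → ℝ) × Matrix ι ι ℝ | (∀ i, |rM.1 i| ≤ c) ∧ ∀ i j, |rM.2 i j| ≤ c} := by
  have hvec : IsCompact {r : ι → ℝ | ∀ i, |r i| ≤ c} := by
    simpa [Set.pi, abs_le] using isCompact_univ_pi fun _ : ι => isCompact_Icc (a := -c) (b := c)
  have hmat : IsCompact {M : Matrix ι ι ℝ | ∀ i j, |M i j| ≤ c} := by
    have h := isCompact_univ_pi fun _ : ι => hvec
    simp only [Set.pi, Set.mem_univ, Set.mem_ofPred_eq, forall_const] at h
    exact h
  exact hvec.prod hmat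

lemma continuousAt_fRM {n : ℕ} {r : Vec n} {M : Matrix (Fin n) (Fin n) ℝ} (hM : M.det ≠ 0) :
    ContinuousAt (fun rM : Vec n × Matrix (Fin n) (Fin n) ℝ => fRM rM.1 rM.2) (r, M) := by
  have hinv : ContinuousAt (fun rM : Vec n × Matrix (Fin n) (Fin n) ℝ => (rM.1, rM.2⁻¹)) (r, M) :=
    continuousAt_fst.prodMk <| (continuousAt_matrix_inv M <| by
      simpa [Ring.inverse_eq_inv'] using continuousAt_inv₀ hM).comp continuousAt_snd
  have hquad : Continuous fun vN : Vec n × Matrix (Fin n) (Fin n) ℝ => vN.1 ⬝ᵥ vN.2 *ᵥ vN.1 :=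
    continuous_fst.dotProduct (continuous_snd.matrix_mulVec continuous_fst)
  exact continuousAt_const.mul <|
    (hquad.continuousAt.comp hinv).add (continuous_snd.matrix_det.continuousAt.log hM)

lemma exists_abs_le_of_fRM_le {n : ℕ} {ρ α : ℝ} (hα : 0 < α) :
    ∃ c, ∀ (r : Vec n) (M : Matrix (Fin n) (Fin n) ℝ),
      algebraMap ℝ _ α ≤ M → fRM r M ≤ ρ → (∀ i, |r i| ≤ c) ∧ ∀ i j, |M i j| ≤ c := by
  set β := exp (2 * ρ) / α ^ (n - 1)
  refine ⟨max β √(β * (2 * ρ - n * log α)), fun r M hαM hf => ?_⟩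
  have hM := posDef_of_algebraMap_le hα hαM
  have hq : 0 ≤ r ⬝ᵥ M⁻¹ *ᵥ r := by simpa using hM.inv.posSemidef.dotProduct_mulVec_nonneg r
  have hf' : r ⬝ᵥ M⁻¹ *ᵥ r + log M.det ≤ 2 * ρ := by unfold fRM at hf; linarith
  have hdet : M.det ≤ exp (2 * ρ) := by
    rw [← exp_log hM.det_pos]; exact exp_le_exp.2 (by linarith)
  have hMβ : M ≤ algebraMap ℝ _ β := by simpa using le_algebraMap_of_det_le hα hαM hdet
  have hlog : n * log α ≤ log M.det := by
    rw [← log_pow]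
    exact log_le_log (pow_pos hα n) (by simpa using pow_card_le_det_of_algebraMap_le hα hαM)
  have hrr : r ⬝ᵥ r ≤ β * (2 * ρ - n * log α) :=
    (hM.dotProduct_self_le_mul_dotProduct_inv_mulVec hMβ r).trans
      (mul_le_mul_of_nonneg_left (by linarith) (by positivity))
  refine ⟨fun i => le_max_of_le_right (Real.abs_le_sqrt (hrr.trans' ?_)),
    fun i j => le_max_of_le_left (hM.posSemidef.abs_apply_le_of_le_algebraMap hMβ i j)⟩
  simpa [dotProduct, sq] using
    Finset.single_le_sum (f := fun k => r k * r k) (fun k _ => mul_self_nonneg (r k))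
      (Finset.mem_univ i)

/-- level compactness of f: for every ρ and α > 0 the set
D_{ρ,α} = {(r,M) : M symmetric positive definite, λ_min(M) ≥ α, f(r,M) ≤ ρ}
is compact. -/
theorem fRM_level_compact
    {n : ℕ} (ρ α : ℝ) (hα : 0 < α) :
    IsCompact {rM : Vec n × Matrix (Fin n) (Fin n) ℝ |
      rM.2.PosDef ∧ α ≤ minEig rM.2 ∧ fRM rM.1 rM.2 ≤ ρ} := by
  rcases isEmpty_or_nonempty (Fin n) with hn | hn
  · -- `minEig` of a `0 × 0` matrix is the junk value `sInf ∅ = 0`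
    convert isCompact_empty
    ext rM
    simp [minEig_of_isEmpty, hα.not_ge]
  have hset : {rM : Vec n × Matrix (Fin n) (Fin n) ℝ |
      rM.2.PosDef ∧ α ≤ minEig rM.2 ∧ fRM rM.1 rM.2 ≤ ρ} =
      {rM | algebraMap ℝ _ α ≤ rM.2} ∩ (fun rM => fRM rM.1 rM.2) ⁻¹' Set.Iic ρ := by
    ext ⟨r, M⟩
    refine ⟨fun ⟨hM, hmin, hf⟩ => ⟨hM.posSemidef.le_minEig_iff_algebraMap_le.1 hmin, hf⟩,
      fun ⟨hαM, hf⟩ => ?_⟩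
    have hM := posDef_of_algebraMap_le hα hαM
    exact ⟨hM, hM.posSemidef.le_minEig_iff_algebraMap_le.2 hαM, hf⟩
  obtain ⟨c, hc⟩ := exists_abs_le_of_fRM_le (n := n) (ρ := ρ) hα
  rw [hset]
  refine (isCompact_setOf_abs_le c).of_isClosed_subset ?_ fun rM ⟨hαM, hf⟩ => hc rM.1 rM.2 hαM hf
  refine ContinuousOn.preimage_isClosed_of_isClosed (fun rM hαM => ?_)
    ((isClosed_setOf_algebraMap_le α).preimage continuous_snd) isClosed_Iic
  exact (continuousAt_fRM (posDef_of_algebraMap_le hα hαM).det_pos.ne').continuousWithinAt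
end
end
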